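/- arXiv:1705.10268 — 3 statements merged into one kernel-verified Lean document; each statement's English description precedes it below -/
import Mathlib

section
/- Let n ≥ 2 and let u_{ij} > 0 be integers, and let M be the n×n integer matrix whose rows are the exponent vectors of the Northcott-type binomials (last row equal to the sum of the first n−1 rows, as in the Northcott construction). If α_1,…,α_{n-1} are integers such that the vector (α_1,…,α_{n-1},0)·M has all coordinates nonnegative, then α_1 = α_2 = ⋯ = α_{n-1} = 0. Equivalently, the only element of the row lattice of M lying in ℕ^n is the zero vector, so the associated monoid ℕ𝒜 is unit free. -/
/-!
If some `α_j` were negative, the `i`-th inequality `α_i u_{n,i} + (α_i - α_{i+1}) u_{i+1,i} ≥ 0`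
forces `α_{i+1} < α_i` as long as `α_i < 0`, so the values keep decreasing from `α_j` to `α_{n-1}`
and then, by the cyclic inequality, on to `α_1`; starting the descent again at `α_1` gives
`α_j ≤ α_1 < α_{n-1} ≤ α_j`. Hence all `α_i ≥ 0`, and then the last inequality
`∑ -α_i u_{i,n} ≥ 0` with positive weights forces every `α_i` to vanish.
-/

theorem le_of_succ_lt_of_neg {R : Type*} [Preorder R] [Zero R] {a : ℕ → R} {j k : ℕ}
    (hstep : ∀ i, j ≤ i → i < k → a i < 0 → a (i + 1) < a i) (hj : a j < 0) (hjk : j ≤ k) :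
    a k ≤ a j := by
  induction k, hjk using Nat.le_induction with
  | base => exact le_rfl
  | succ m hjm ih =>
    have hm : a m ≤ a j := ih fun i hji him => hstep i hji (by omega)
    exact ((hstep m hjm (by omega) (hm.trans_lt hj)).trans_le hm).le

section

variable {R : Type*} [CommRing R] [LinearOrder R] [IsStrictOrderedRing R]

theorem lt_of_mul_add_sub_mul_nonneg {a b p q : R} (hp : 0 < p) (hq : 0 < q) (ha : a < 0)
    (h : 0 ≤ a * p + (a - b) * q) : b < a := by
  nlinarith [mul_pos hp (neg_pos.mpr ha)]

theorem eq_zero_of_sum_neg_mul_nonneg {ι : Type*} {s : Finset ι} {a w : ι → R}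
    (hw : ∀ i ∈ s, 0 < w i) (ha : ∀ i ∈ s, 0 ≤ a i) (h : 0 ≤ ∑ i ∈ s, -a i * w i) :
    ∀ i ∈ s, a i = 0 := by
  have hterm : ∀ i ∈ s, -a i * w i ≤ 0 := fun i hi =>
    mul_nonpos_of_nonpos_of_nonneg (neg_nonpos.mpr (ha i hi)) (hw i hi).le
  have hsum : ∑ i ∈ s, -a i * w i = 0 := le_antisymm (Finset.sum_nonpos hterm) h
  intro i hi
  have hzero := (Finset.sum_eq_zero_iff_of_nonpos hterm).mp hsum i hi
  simpa [(hw i hi).ne'] using hzero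

theorem northcott_alpha_nonneg {n : ℕ} {u : ℕ → ℕ → R}
    (hu : ∀ i j, 1 ≤ i → i ≤ n → 1 ≤ j → j ≤ n → 0 < u i j) {α : ℕ → R}
    (h1 : ∀ i, 1 ≤ i → i ≤ n - 2 → 0 ≤ α i * u n i + (α i - α (i + 1)) * u (i + 1) i)
    (h2 : 0 ≤ α (n - 1) * u n (n - 1) + (α (n - 1) - α 1) * u 1 (n - 1))
    {j : ℕ} (hj1 : 1 ≤ j) (hjn : j ≤ n - 1) : 0 ≤ α j := by
  have hstep : ∀ i, 1 ≤ i → i < n - 1 → α i < 0 → α (i + 1) < α i := fun i hi1 hin hi =>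
    lt_of_mul_add_sub_mul_nonneg (hu n i (by omega) le_rfl hi1 (by omega))
      (hu (i + 1) i (by omega) (by omega) hi1 (by omega)) hi (h1 i hi1 (by omega))
  by_contra! hj
  have hlast : α (n - 1) ≤ α j :=
    le_of_succ_lt_of_neg (fun i hji => hstep i (hj1.trans hji)) hj hjn
  have hfirst : α 1 < α (n - 1) :=
    lt_of_mul_add_sub_mul_nonneg (hu n (n - 1) (by omega) le_rfl (by omega) (by omega))
      (hu 1 (n - 1) le_rfl (by omega) (by omega) (by omega)) (hlast.trans_lt hj) h2
  have hback : α j ≤ α 1 :=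
    le_of_succ_lt_of_neg (fun i h1i _ => hstep i h1i (by omega))
      ((hfirst.trans_le hlast).trans hj) hj1
  exact (hback.trans_lt hfirst).not_ge hlast

end

theorem northcott_unit_free_general (n : ℕ) (u : ℕ → ℕ → ℤ)
    (hu : ∀ i j, 1 ≤ i → i ≤ n → 1 ≤ j → j ≤ n → 0 < u i j)
    (α : ℕ → ℤ)
    (h1 : ∀ i, 1 ≤ i → i ≤ n - 2 → 0 ≤ α i * u n i + (α i - α (i + 1)) * u (i + 1) i)
    (h2 : 0 ≤ α (n - 1) * u n (n - 1) + (α (n - 1) - α 1) * u 1 (n - 1))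
    (h3 : 0 ≤ ∑ i ∈ Finset.Icc 1 (n - 1), (-(α i)) * u i n) :
    ∀ i, 1 ≤ i → i ≤ n - 1 → α i = 0 := by
  intro i hi1 hin
  refine eq_zero_of_sum_neg_mul_nonneg (s := Finset.Icc 1 (n - 1)) ?_ ?_ h3 i
    (Finset.mem_Icc.mpr ⟨hi1, hin⟩)
  · intro k hk
    rw [Finset.mem_Icc] at hk
    exact hu k n hk.1 (by omega) (by omega) le_rfl
  · intro k hk
    rw [Finset.mem_Icc] at hk
    exact northcott_alpha_nonneg hu h1 h2 hk.1 hk.2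

/-- if `(α_1,…,α_{n-1},0)·M` has all coordinates nonnegative, where `M` is the
exponent matrix of a Northcott-type ideal with positive exponents `u_{ij}` (1-based indices),
then all the `α_i` vanish; hence the associated monoid is unit free. -/
theorem northcott_unit_free (n : ℕ) (hn : 2 ≤ n) (u : ℕ → ℕ → ℤ)
    (hu : ∀ i j, 1 ≤ i → i ≤ n → 1 ≤ j → j ≤ n → 0 < u i j)
    (α : ℕ → ℤ)
    (h1 : ∀ i, 1 ≤ i → i ≤ n - 2 → 0 ≤ α i * u n i + (α i - α (i + 1)) * u (i + 1) i)
    (h2 : 0 ≤ α (n - 1) * u n (n - 1) + (α (n - 1) - α 1) * u 1 (n - 1))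
    (h3 : 0 ≤ ∑ i ∈ Finset.Icc 1 (n - 1), (-(α i)) * u i n) :
    ∀ i, 1 ≤ i → i ≤ n - 1 → α i = 0 :=
  northcott_unit_free_general n u hu α h1 h2 h3
end

section
/- Let S = ℕ𝒜 be a numerical semigroup of Northcott type with generators a_1,…,a_n, exponents u_{ij} > 0, σ = (1 2 ⋯ n−1), and N = ∑_{i=1}^{n-1}(u_{ni}+u_{σ(i),i}−1)·a_i. Then the set of pseudo-Frobenius numbers of S is PF(S) = { N − u_{σ(j),j}·a_j − a_n : j ∈ {1,…,n−1} }, these n−1 values are pairwise distinct, and hence the type of S equals n−1. -/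
open MvPolynomial

/-- `σ` : the cycle `(1 2 ⋯ n−1)` in 0-based indexing on `{0,…,n-2}`. -/
def ntSig (n i : ℕ) : ℕ := if i = n - 2 then 0 else i + 1

/-- `σ⁻¹` in 0-based indexing on `{0,…,n-2}`. -/
def ntTau (n i : ℕ) : ℕ := if i = 0 then n - 2 else i - 1

/-- The Northcott binomial `f_i = x_i^{u_{ni}+u_{σ(i),i}} − x_{σ⁻¹(i)}^{u_{i,σ⁻¹(i)}} x_n^{u_{in}}`
(0-based: index `n-1` plays the role of the paper's `n`). -/
noncomputable def ntF (K : Type*) [Field K] (n : ℕ) (hn : 3 ≤ n) (u : ℕ → ℕ → ℕ)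
    (i : Fin (n - 1)) : MvPolynomial (Fin n) K :=
  X (⟨(i : ℕ), by have := i.isLt; omega⟩ : Fin n) ^ (u (n - 1) i + u (ntSig n i) i)
    - X (⟨ntTau n i, by have := i.isLt; unfold ntTau; split <;> omega⟩ : Fin n) ^ (u i (ntTau n i))
      * X (⟨n - 1, by omega⟩ : Fin n) ^ (u i (n - 1))

/-- The Northcott binomial `D = x_1^{u_{n1}}⋯x_{n-1}^{u_{n,n-1}} − x_n^{∑ u_{in}}`. -/
noncomputable def ntD (K : Type*) [Field K] (n : ℕ) (hn : 3 ≤ n) (u : ℕ → ℕ → ℕ) :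
    MvPolynomial (Fin n) K :=
  (∏ i : Fin (n - 1), X (⟨(i : ℕ), by have := i.isLt; omega⟩ : Fin n) ^ (u (n - 1) i))
    - X (⟨n - 1, by omega⟩ : Fin n) ^ (∑ i : Fin (n - 1), u (i : ℕ) (n - 1))

/-- The critical ideal of Northcott type `⟨f_1,…,f_{n-1},D⟩`. -/
noncomputable def ntIdeal (K : Type*) [Field K] (n : ℕ) (hn : 3 ≤ n) (u : ℕ → ℕ → ℕ) :
    Ideal (MvPolynomial (Fin n) K) :=
  Ideal.span (Set.range (ntF K n hn u) ∪ {ntD K n hn u})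

/-- Positivity of the relevant exponents `u_{ij} > 0`. -/
def ntPos (n : ℕ) (u : ℕ → ℕ → ℕ) : Prop :=
  ∀ i, i < n - 1 → 0 < u (n - 1) i ∧ 0 < u i (n - 1) ∧ 0 < u i (ntTau n i) ∧ 0 < u (ntSig n i) i

/-!
Orient the Northcott binomials as rewriting rules on exponent vectors `v : Fin n → ℕ`:
`f_i : c_i e_i ⟶ u_{i,τ i} e_{τ i} + u_{i n} e_n` and `D : ∑ u_{n i} e_i ⟶ E e_n`, with `τ = σ⁻¹`.
A step preserves the value `v ⬝ᵥ a` (the binomials lie in the kernel) and strictly raises the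
`e_n`-coordinate, so rewriting terminates. Rules with disjoint supports commute, and the only
genuine overlap, of `f_i` with `D`, is resolved by firing `f_{τ i}, f_{τ² i}, …` once around the
cycle; by Newman's lemma the system is confluent. As the kernel is generated by the rule
binomials, vectors of equal value are joinable, so every element of `S` has exactly one reduced
representative, one to which no rule applies.

If `z` is pseudo-Frobenius, the reduced representative `μ` of `z + a_n` has no `e_n`-part
(otherwise `z ∈ S`), and `μ + e_j` is reducible for every `j ≠ n` (otherwise `z + a_j` would have
two reduced representatives). This pins `μ` down to `μ_j`, with coordinates `c_i - 1` for `i ≠ j`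
and `u_{n j} - 1` at `j`, of value `N - u_{σ j, j} a_j`. Conversely every such `z` is
pseudo-Frobenius, and distinct `μ_j` have distinct values by uniqueness of reduced representatives.
-/

namespace Relation

variable {α : Type*} {r : α → α → Prop}

theorem newman (hwf : WellFounded fun b a => r a b)
    (hloc : ∀ a b c, r a b → r a c → Join (ReflTransGen r) b c) {a b c : α}
    (hab : ReflTransGen r a b) (hac : ReflTransGen r a c) : Join (ReflTransGen r) b c := by
  induction a using hwf.induction generalizing b c with
  | _ a ih =>
  rcases hab.cases_head with rfl | ⟨b₁, hab₁, hb₁b⟩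
  · exact ⟨c, hac, .refl⟩
  rcases hac.cases_head with rfl | ⟨c₁, hac₁, hc₁c⟩
  · exact ⟨b, .refl, hab⟩
  obtain ⟨d, hb₁d, hc₁d⟩ := hloc a b₁ c₁ hab₁ hac₁
  obtain ⟨e, hbe, hde⟩ := ih b₁ hab₁ hb₁b hb₁d
  obtain ⟨f, hcf, hef⟩ := ih c₁ hac₁ hc₁c (hc₁d.trans hde)
  exact ⟨f, hbe.trans hef, hcf⟩

theorem exists_reflTransGen_irreducible (hwf : WellFounded fun b a => r a b) (a : α) :
    ∃ b, ReflTransGen r a b ∧ ∀ c, ¬ r b c := by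
  induction a using hwf.induction with
  | _ a ih =>
  by_cases h : ∃ b, r a b
  · obtain ⟨b, hab⟩ := h
    obtain ⟨c, hbc, hc⟩ := ih b hab
    exact ⟨c, .head hab hbc, hc⟩
  · exact ⟨a, .refl, not_exists.mp h⟩

end Relation

open Relation

section RuleStep

variable {M ι : Type*} [AddCommMonoid M] (l r : ι → M)

def RuleStep (v w : M) : Prop := ∃ i δ, v = δ + l i ∧ w = δ + r i

variable {l r}

theorem RuleStep.rule (i : ι) : RuleStep l r (l i) (r i) :=
  ⟨i, 0, (zero_add _).symm, (zero_add _).symm⟩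

theorem RuleStep.add_left (δ : M) {v w : M} (h : RuleStep l r v w) :
    RuleStep l r (δ + v) (δ + w) := by
  obtain ⟨i, δ', rfl, rfl⟩ := h
  exact ⟨i, δ + δ', (add_assoc _ _ _).symm, (add_assoc _ _ _).symm⟩

theorem RuleStep.reflTransGen_add_left (δ : M) {v w : M} (h : ReflTransGen (RuleStep l r) v w) :
    ReflTransGen (RuleStep l r) (δ + v) (δ + w) :=
  h.lift (δ + ·) fun _ _ => RuleStep.add_left δ

theorem RuleStep.reflTransGen_add {v v' w w' : M} (hv : ReflTransGen (RuleStep l r) v v')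
    (hw : ReflTransGen (RuleStep l r) w w') : ReflTransGen (RuleStep l r) (v + w) (v' + w') := by
  refine (RuleStep.reflTransGen_add_left v hw).trans ?_
  simpa only [add_comm _ w'] using RuleStep.reflTransGen_add_left w' hv

theorem RuleStep.map_eq_of_reflTransGen {N : Type*} [AddCommMonoid N] (f : M →+ N)
    (hf : ∀ i, f (l i) = f (r i)) {v w : M} (h : ReflTransGen (RuleStep l r) v w) :
    f v = f w := by
  induction h with
  | refl => rfl
  | tail _ hstep ih =>
    obtain ⟨i, δ, rfl, rfl⟩ := hstep
    rw [ih, map_add, map_add, hf]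

theorem exists_ruleStep_iff [PartialOrder M] [CanonicallyOrderedAdd M] {v : M} :
    (∃ w, RuleStep l r v w) ↔ ∃ i, l i ≤ v := by
  simp only [RuleStep, le_iff_exists_add']
  exact ⟨fun ⟨_, i, δ, hv, _⟩ => ⟨i, δ, hv⟩,
    fun ⟨i, δ, hv⟩ => ⟨_, i, δ, hv, rfl⟩⟩

variable (l r) in
def RuleStep.joinCon
    (hconf : ∀ {a b c}, ReflTransGen (RuleStep l r) a b → ReflTransGen (RuleStep l r) a c →
      Join (ReflTransGen (RuleStep l r)) b c) : AddCon M where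
  r := Join (ReflTransGen (RuleStep l r))
  iseqv := equivalence_join fun _ _ _ => hconf
  add' := fun ⟨d, hvd, hwd⟩ ⟨e, hxe, hye⟩ =>
    ⟨d + e, RuleStep.reflTransGen_add hvd hxe, RuleStep.reflTransGen_add hwd hye⟩

theorem RuleStep.joinCon_rule
    (hconf : ∀ {a b c}, ReflTransGen (RuleStep l r) a b → ReflTransGen (RuleStep l r) a c →
      Join (ReflTransGen (RuleStep l r)) b c) (i : ι) :
    RuleStep.joinCon l r hconf (l i) (r i) :=
  ⟨r i, .single (.rule i), .refl⟩

end RuleStep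

theorem Pi.single_le_iff {σ α : Type*} [DecidableEq σ] [AddCommMonoid α] [PartialOrder α]
    [CanonicallyOrderedAdd α] {x : σ} {k : α} {v : σ → α} :
    Pi.single x k ≤ v ↔ k ≤ v x := by
  refine ⟨fun h => by simpa using h x, fun h y => ?_⟩
  rcases eq_or_ne y x with rfl | hy
  · simpa using h
  · simp [hy]

theorem exists_eq_add_single {σ : Type*} [DecidableEq σ] {v : σ → ℕ} {x : σ} (h : 0 < v x) :
    ∃ w : σ → ℕ, v = w + Pi.single x 1 := by
  refine ⟨v - Pi.single x 1, funext fun y => ?_⟩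
  rcases eq_or_ne y x with rfl | hy
  · simp; omega
  · simp [hy]

theorem Pi.single_sup_add_sub_single {σ : Type*} [DecidableEq σ] {x : σ} {a c : ℕ}
    {V : σ → ℕ} (hV : V x = 0) (hac : a ≤ c) :
    Pi.single x c ⊔ (Pi.single x a + V) - Pi.single x c = V := by
  funext y
  rcases eq_or_ne y x with rfl | hy
  · simp [hV, hac]
  · simp [hy]

theorem Pi.single_sup_add_sub_self {σ : Type*} [DecidableEq σ] {x : σ} {a c : ℕ}
    {V : σ → ℕ} (hV : V x = 0) (hac : a ≤ c) :
    Pi.single x c ⊔ (Pi.single x a + V) - (Pi.single x a + V) = Pi.single x (c - a) := by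
  funext y
  rcases eq_or_ne y x with rfl | hy
  · simp [hV, hac]
  · simp [hy]

theorem RuleStep.join_of_critical {σ ι : Type*} {l r : ι → σ → ℕ}
    (hcrit : ∀ i j, Join (ReflTransGen (RuleStep l r))
      (l i ⊔ l j - l i + r i) (l i ⊔ l j - l j + r j))
    {v w₁ w₂ : σ → ℕ} (h₁ : RuleStep l r v w₁) (h₂ : RuleStep l r v w₂) :
    Join (ReflTransGen (RuleStep l r)) w₁ w₂ := by
  obtain ⟨i, δ₁, hv₁, rfl⟩ := h₁
  obtain ⟨j, δ₂, hv₂, rfl⟩ := h₂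
  have hδ : ∀ {δ m : σ → ℕ}, v = δ + m → m ≤ l i ⊔ l j →
      δ = (v - l i ⊔ l j) + (l i ⊔ l j - m) := by
    intro δ m hv hm
    have hij : l i ⊔ l j ≤ v := sup_le (hv₁ ▸ le_add_self) (hv₂ ▸ le_add_self)
    funext y
    have := congrFun hv y
    have := hm y
    have := hij y
    simp only [Pi.add_apply, Pi.sub_apply] at *
    omega
  obtain ⟨d, h₁, h₂⟩ := hcrit i j
  refine ⟨(v - l i ⊔ l j) + d, ?_, ?_⟩
  · rw [hδ hv₁ le_sup_left, add_assoc]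
    exact RuleStep.reflTransGen_add_left _ h₁
  · rw [hδ hv₂ le_sup_right, add_assoc]
    exact RuleStep.reflTransGen_add_left _ h₂

section Binomial

variable {σ K : Type*} [Fintype σ] [CommRing K]

variable (K) in
noncomputable def prodXPow (v : σ → ℕ) : MvPolynomial σ K := ∏ x, X x ^ v x

theorem prodXPow_add (v w : σ → ℕ) : prodXPow K (v + w) = prodXPow K v * prodXPow K w := by
  simp only [prodXPow, Pi.add_apply, pow_add, Finset.prod_mul_distrib]

theorem prodXPow_single [DecidableEq σ] (x : σ) (k : ℕ) :
    prodXPow K (Pi.single x k) = X x ^ k := by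
  rw [prodXPow, Finset.prod_eq_single x (fun y _ hy => by simp [hy]) (by simp)]
  simp

theorem prodXPow_sum {ι : Type*} (s : Finset ι) (g : ι → σ → ℕ) :
    prodXPow K (∑ i ∈ s, g i) = ∏ i ∈ s, prodXPow K (g i) := by
  simp only [prodXPow, Finset.sum_apply, ← Finset.prod_pow_eq_pow_sum]
  exact Finset.prod_comm

theorem aeval_prodXPow (a v : σ → ℕ) :
    aeval (fun x => (Polynomial.X : Polynomial K) ^ a x) (prodXPow K v) =
      Polynomial.X ^ (v ⬝ᵥ a) := by
  simp only [prodXPow, map_prod, map_pow, aeval_X, ← pow_mul, Finset.prod_pow_eq_pow_sum,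
    dotProduct, mul_comm]

theorem dotProduct_eq_of_sub_mem_ker [Nontrivial K] {a v w : σ → ℕ}
    (h : prodXPow K v - prodXPow K w ∈
      RingHom.ker (aeval fun x => (Polynomial.X : Polynomial K) ^ a x)) :
    v ⬝ᵥ a = w ⬝ᵥ a := by
  rw [RingHom.mem_ker, map_sub, aeval_prodXPow, aeval_prodXPow, sub_eq_zero] at h
  simpa using congrArg Polynomial.natDegree h

variable (K) in
noncomputable def AddCon.monomialAlgHom [DecidableEq σ] (c : AddCon (σ → ℕ)) :
    MvPolynomial σ K →ₐ[K] AddMonoidAlgebra K c.Quotient :=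
  aeval fun x => AddMonoidAlgebra.single (c.mk' (Pi.single x 1)) 1

theorem AddCon.monomialAlgHom_prodXPow [DecidableEq σ] (c : AddCon (σ → ℕ)) (v : σ → ℕ) :
    c.monomialAlgHom K (prodXPow K v) = AddMonoidAlgebra.single (c.mk' v) 1 := by
  simp only [prodXPow, monomialAlgHom, map_prod, map_pow, aeval_X, AddMonoidAlgebra.single_pow,
    one_pow, AddMonoidAlgebra.prod_single, Finset.prod_const_one, ← map_nsmul, ← map_sum]
  congr 2
  funext y
  simp [Finset.sum_apply, Pi.single_apply]

theorem AddCon.rel_of_sub_mem_span [DecidableEq σ] [Nontrivial K] {ι : Type*}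
    {l r : ι → σ → ℕ} {c : AddCon (σ → ℕ)} (hc : ∀ i, c (l i) (r i)) {v w : σ → ℕ}
    (h : prodXPow K v - prodXPow K w ∈
      Ideal.span (Set.range fun i => prodXPow K (l i) - prodXPow K (r i))) :
    c v w := by
  have hle : Ideal.span (Set.range fun i => prodXPow K (l i) - prodXPow K (r i)) ≤
      RingHom.ker (c.monomialAlgHom K) := by
    rw [Ideal.span_le]
    rintro _ ⟨i, rfl⟩
    rw [SetLike.mem_coe, RingHom.mem_ker, map_sub, monomialAlgHom_prodXPow, monomialAlgHom_prodXPow,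
      sub_eq_zero]
    exact congrArg (AddMonoidAlgebra.single · (1 : K)) ((AddCon.eq c).2 (hc i))
  have := hle h
  rw [RingHom.mem_ker, map_sub, monomialAlgHom_prodXPow, monomialAlgHom_prodXPow,
    sub_eq_zero] at this
  exact (AddCon.eq c).1 (AddMonoidAlgebra.single_left_injective one_ne_zero this)

end Binomial

section PseudoFrobenius

def pseudoFrobenius (S : AddSubmonoid ℕ) : Set ℤ :=
  {z | (¬ ∃ s ∈ S, (s : ℤ) = z) ∧
    ∀ s : ℕ, s ∈ S → s ≠ 0 → ∃ t ∈ S, (t : ℤ) = z + s}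

variable {σ : Type*} [Fintype σ] {a : σ → ℕ}

theorem mem_closure_range_iff_dotProduct {s : ℕ} :
    s ∈ AddSubmonoid.closure (Set.range a) ↔ ∃ v : σ → ℕ, v ⬝ᵥ a = s := by
  simp [AddSubmonoid.mem_closure_range_iff_of_fintype, dotProduct, eq_comm]

theorem exists_mem_closure_range_iff {z : ℤ} :
    (∃ s ∈ AddSubmonoid.closure (Set.range a), (s : ℤ) = z) ↔
      ∃ v : σ → ℕ, ((v ⬝ᵥ a : ℕ) : ℤ) = z := by
  simp only [mem_closure_range_iff_dotProduct]
  exact ⟨fun ⟨_, ⟨v, hv⟩, hs⟩ => ⟨v, hv ▸ hs⟩,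
    fun ⟨v, hv⟩ => ⟨_, ⟨v, rfl⟩, hv⟩⟩

theorem mem_pseudoFrobenius_closure_iff (ha : ∀ x, 0 < a x) {z : ℤ} :
    z ∈ pseudoFrobenius (AddSubmonoid.closure (Set.range a)) ↔
      (¬ ∃ v : σ → ℕ, ((v ⬝ᵥ a : ℕ) : ℤ) = z) ∧
        ∀ x, ∃ v : σ → ℕ, ((v ⬝ᵥ a : ℕ) : ℤ) = z + a x := by
  simp only [pseudoFrobenius, Set.mem_ofPred_eq, ← exists_mem_closure_range_iff]
  refine and_congr_right fun _ => ⟨fun h x => h _ (AddSubmonoid.subset_closure ⟨x, rfl⟩)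
    (ha x).ne', fun h s hs hs0 => ?_⟩
  classical
  obtain ⟨v, rfl⟩ := mem_closure_range_iff_dotProduct.1 hs
  obtain ⟨x, hx⟩ : ∃ x, v x ≠ 0 := by
    by_contra! hv
    exact hs0 (by simp [funext hv])
  obtain ⟨w, rfl⟩ := exists_eq_add_single (Nat.pos_of_ne_zero hx)
  obtain ⟨t, ht, htz⟩ := h x
  refine ⟨t + w ⬝ᵥ a, add_mem ht (mem_closure_range_iff_dotProduct.2 ⟨w, rfl⟩), ?_⟩
  simp [add_dotProduct, htz]
  ring

end PseudoFrobenius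

namespace Northcott

variable {n : ℕ}

def incl (i : Fin (n - 1)) : Fin n := Fin.castLE (Nat.sub_le n 1) i

def last (hn : 3 ≤ n) : Fin n := ⟨n - 1, by omega⟩

def tau (i : Fin (n - 1)) : Fin (n - 1) :=
  ⟨ntTau n i, by have := i.isLt; unfold ntTau; split <;> omega⟩

@[simp] theorem val_incl (i : Fin (n - 1)) : (incl i : ℕ) = i := rfl
@[simp] theorem val_last (hn : 3 ≤ n) : (last hn : ℕ) = n - 1 := rfl
@[simp] theorem val_tau (i : Fin (n - 1)) : (tau i : ℕ) = ntTau n i := rfl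

theorem incl_injective : Function.Injective (incl (n := n)) := Fin.castLE_injective (Nat.sub_le n 1)

theorem incl_ne_last (hn : 3 ≤ n) (i : Fin (n - 1)) : incl i ≠ last hn := by
  simp [Fin.ext_iff, i.isLt.ne]

theorem incl_or_last (hn : 3 ≤ n) (x : Fin n) : (∃ i, x = incl i) ∨ x = last hn := by
  by_cases hx : (x : ℕ) < n - 1
  · exact .inl ⟨⟨x, hx⟩, rfl⟩
  · exact .inr (Fin.ext (by simp; omega))

theorem ntSig_tau (i : Fin (n - 1)) : ntSig n (tau i) = i := by
  have := i.isLt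
  simp only [val_tau, ntTau, ntSig]
  split_ifs <;> omega

theorem val_iterate_tau (i : Fin (n - 1)) {s : ℕ} (hs : s ≤ n - 1) :
    (tau^[s] i : ℕ) = if s ≤ i then i - s else i + (n - 1) - s := by
  induction s with
  | zero => simp
  | succ s ih =>
    have := i.isLt
    rw [Function.iterate_succ_apply', val_tau, ih (by omega), ntTau]
    split_ifs <;> omega

theorem iterate_tau_sub_one (i : Fin (n - 1)) : tau^[n - 1] i = i :=
  Fin.ext (by rw [val_iterate_tau i le_rfl]; split_ifs <;> omega)

theorem ntSig_iterate_tau_succ (i : Fin (n - 1)) (s : ℕ) :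
    ntSig n (tau^[s + 1] i) = tau^[s] i := by
  rw [Function.iterate_succ_apply', ntSig_tau]

theorem sum_range_iterate_tau {M : Type*} [AddCommMonoid M] (i : Fin (n - 1))
    (f : Fin (n - 1) → M) :
    ∑ s ∈ Finset.range (n - 1), f (tau^[s] i) = ∑ k, f k := by
  have hinj : Set.InjOn (fun s => tau^[s] i) (Finset.range (n - 1)) := by
    intro s hs t ht hst
    simp only [Finset.coe_range, Set.mem_Iio] at hs ht
    have := congrArg Fin.val hst
    simp only [val_iterate_tau i hs.le, val_iterate_tau i ht.le] at this
    split_ifs at this <;> omega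
  rw [← Finset.sum_image hinj,
    Finset.eq_univ_of_card (Finset.image _ _) (by simp [Finset.card_image_of_injOn hinj])]

def ofInner (f : Fin (n - 1) → ℕ) : Fin n → ℕ := ∑ i, Pi.single (incl i) (f i)

@[simp] theorem ofInner_incl (f : Fin (n - 1) → ℕ) (i : Fin (n - 1)) :
    ofInner f (incl i) = f i := by
  simp [ofInner, Finset.sum_apply, Pi.single_apply, incl_injective.eq_iff]

@[simp] theorem ofInner_last (hn : 3 ≤ n) (f : Fin (n - 1) → ℕ) :
    ofInner f (last hn) = 0 := by
  simp [ofInner, Finset.sum_apply, (incl_ne_last hn _).symm]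

theorem ext_incl_last (hn : 3 ≤ n) {v w : Fin n → ℕ} (h : ∀ i, v (incl i) = w (incl i))
    (hlast : v (last hn) = w (last hn)) : v = w := by
  funext x
  rcases incl_or_last hn x with ⟨i, rfl⟩ | rfl
  exacts [h i, hlast]

theorem ofInner_dotProduct (f : Fin (n - 1) → ℕ) (a : Fin n → ℕ) :
    ofInner f ⬝ᵥ a = ∑ i, f i * a (incl i) := by
  simp [ofInner, sum_dotProduct, single_dotProduct]

theorem ofInner_le_iff (hn : 3 ≤ n) {f : Fin (n - 1) → ℕ} {v : Fin n → ℕ} :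
    ofInner f ≤ v ↔ ∀ i, f i ≤ v (incl i) := by
  refine ⟨fun h i => by simpa using h (incl i), fun h x => ?_⟩
  rcases incl_or_last hn x with ⟨i, rfl⟩ | rfl
  · simpa using h i
  · simp

variable (u : ℕ → ℕ → ℕ)

def c (i : Fin (n - 1)) : ℕ := u (n - 1) i + u (ntSig n i) i

def dExp (n : ℕ) (u : ℕ → ℕ → ℕ) : ℕ := ∑ i : Fin (n - 1), u i (n - 1)

-- The rule `some i` is the binomial `f_i`, the rule `none` is `D`.
def lhs : Option (Fin (n - 1)) → Fin n → ℕ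
  | some i => Pi.single (incl i) (c u i)
  | none => ofInner fun i => u (n - 1) i

def rhs (hn : 3 ≤ n) : Option (Fin (n - 1)) → Fin n → ℕ
  | some i => Pi.single (incl (tau i)) (u i (ntTau n i)) + Pi.single (last hn) (u i (n - 1))
  | none => Pi.single (last hn) (dExp n u)

abbrev Step (hn : 3 ≤ n) : (Fin n → ℕ) → (Fin n → ℕ) → Prop :=
  RuleStep (lhs u) (rhs u hn)

theorem prodXPow_ofInner {K : Type*} [CommRing K] (f : Fin (n - 1) → ℕ) :
    prodXPow K (ofInner f) = ∏ i, X (incl i) ^ f i := by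
  simp only [ofInner, prodXPow_sum, prodXPow_single]

theorem ntIdeal_eq_span (K : Type*) [Field K] (hn : 3 ≤ n) :
    ntIdeal K n hn u =
      Ideal.span (Set.range fun ρ => prodXPow K (lhs u ρ) - prodXPow K (rhs u hn ρ)) := by
  have hF : ntF K n hn u =
      fun i => prodXPow K (lhs u (some i)) - prodXPow K (rhs u hn (some i)) := by
    funext i
    simp only [lhs, rhs, prodXPow_add, prodXPow_single]
    rfl
  have hD : ntD K n hn u = prodXPow K (lhs u none) - prodXPow K (rhs u hn none) := by
    simp only [lhs, rhs, prodXPow_ofInner, prodXPow_single]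
    rfl
  rw [ntIdeal, Option.range_eq, hF, hD, Set.insert_eq, Set.union_comm]
  rfl

variable {u}

theorem lhs_dotProduct {K : Type*} [Field K] {hn : 3 ≤ n} {a : Fin n → ℕ}
    (hker : RingHom.ker (aeval fun i => (Polynomial.X : Polynomial K) ^ a i) = ntIdeal K n hn u)
    (ρ : Option (Fin (n - 1))) : lhs u ρ ⬝ᵥ a = rhs u hn ρ ⬝ᵥ a := by
  refine dotProduct_eq_of_sub_mem_ker (K := K) ?_
  rw [hker, ntIdeal_eq_span]
  exact Ideal.subset_span ⟨ρ, rfl⟩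

theorem lhs_apply_last (hn : 3 ≤ n) (ρ : Option (Fin (n - 1))) : lhs u ρ (last hn) = 0 := by
  cases ρ with
  | some i => simp [lhs, incl_ne_last hn i |>.symm]
  | none => simp [lhs]

theorem rhs_apply_last_pos (hn : 3 ≤ n) (hu : ntPos n u) (ρ : Option (Fin (n - 1))) :
    0 < rhs u hn ρ (last hn) := by
  cases ρ with
  | some i => simpa [rhs, incl_ne_last hn (tau i) |>.symm] using (hu i i.isLt).2.1
  | none =>
    simp only [rhs, dExp, Pi.single_eq_same]
    exact Finset.sum_pos (fun i _ => (hu i i.isLt).2.1) ⟨⟨0, by omega⟩, Finset.mem_univ _⟩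

theorem Step.last_lt {hn : 3 ≤ n} (hu : ntPos n u) {v w : Fin n → ℕ} (h : Step u hn v w) :
    v (last hn) < w (last hn) := by
  obtain ⟨ρ, δ, rfl, rfl⟩ := h
  simp only [Pi.add_apply, lhs_apply_last]
  have := rhs_apply_last_pos hn hu ρ
  omega

theorem reflTransGen_step_last_le {hn : 3 ≤ n} (hu : ntPos n u) {v w : Fin n → ℕ}
    (h : ReflTransGen (Step u hn) v w) : v (last hn) ≤ w (last hn) := by
  induction h with
  | refl => rfl
  | tail _ hstep ih => exact ih.trans (hstep.last_lt hu).le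

theorem reflTransGen_step_dotProduct_eq {hn : 3 ≤ n} {a : Fin n → ℕ}
    (hrel : ∀ ρ, lhs u ρ ⬝ᵥ a = rhs u hn ρ ⬝ᵥ a) {v w : Fin n → ℕ}
    (h : ReflTransGen (Step u hn) v w) : v ⬝ᵥ a = w ⬝ᵥ a :=
  RuleStep.map_eq_of_reflTransGen
    (AddMonoidHom.mk ⟨(· ⬝ᵥ a), zero_dotProduct a⟩ fun v w => add_dotProduct v w a) hrel h

theorem wellFounded_step {hn : 3 ≤ n} (hu : ntPos n u) {a : Fin n → ℕ} (ha : 0 < a (last hn))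
    (hrel : ∀ ρ, lhs u ρ ⬝ᵥ a = rhs u hn ρ ⬝ᵥ a) : WellFounded fun w v => Step u hn v w := by
  refine Subrelation.wf (fun {w v} h => ?_)
    (measure fun v => v ⬝ᵥ a - v (last hn) * a (last hn)).wf
  have hval := reflTransGen_step_dotProduct_eq hrel (.single h)
  have hlt : v (last hn) * a (last hn) < w (last hn) * a (last hn) :=
    Nat.mul_lt_mul_of_pos_right (h.last_lt hu) ha
  have hle : w (last hn) * a (last hn) ≤ w ⬝ᵥ a :=
    Finset.single_le_sum (f := fun x => w x * a x) (fun _ _ => Nat.zero_le _) (Finset.mem_univ _)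
  change w ⬝ᵥ a - w (last hn) * a (last hn) < v ⬝ᵥ a - v (last hn) * a (last hn)
  omega

section Cascade

variable (u) (hn : 3 ≤ n)

-- The state reached from the overlap of `f_i` and `D` after firing `f_i, f_{τ i}, …, f_{τ^t i}`.
def cascade (i : Fin (n - 1)) (t : ℕ) : Fin n → ℕ :=
  ∑ s ∈ Finset.Ico (t + 1) (n - 1), Pi.single (incl (tau^[s] i)) (u (n - 1) (tau^[s] i))
    + Pi.single (incl (tau^[t + 1] i)) (u (tau^[t] i) (tau^[t + 1] i))
    + Pi.single (last hn) (∑ s ∈ Finset.range (t + 1), u (tau^[s] i) (n - 1))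

theorem step_cascade (i : Fin (n - 1)) {t : ℕ} (ht : t + 2 ≤ n - 1) :
    Step u hn (cascade u hn i t) (cascade u hn i (t + 1)) := by
  refine ⟨some (tau^[t + 1] i),
    ∑ s ∈ Finset.Ico (t + 2) (n - 1), Pi.single (incl (tau^[s] i)) (u (n - 1) (tau^[s] i))
      + Pi.single (last hn) (∑ s ∈ Finset.range (t + 1), u (tau^[s] i) (n - 1)), ?_, ?_⟩
  · rw [cascade, Finset.sum_eq_sum_Ico_succ_bot (by omega : t + 1 < n - 1)]
    simp only [lhs, c, ntSig_iterate_tau_succ, Pi.single_add]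
    abel
  · simp only [cascade, rhs, Finset.sum_range_succ (n := t + 1), Pi.single_add, ← val_tau,
      ← Function.iterate_succ_apply' tau]
    abel

theorem reflTransGen_cascade (i : Fin (n - 1)) {t : ℕ} (ht : t ≤ n - 2) :
    ReflTransGen (Step u hn) (cascade u hn i 0) (cascade u hn i t) := by
  induction t with
  | zero => rfl
  | succ t ih => exact (ih (by omega)).tail (step_cascade u hn i (by omega))

theorem lhs_none_eq (i : Fin (n - 1)) :
    lhs u none = Pi.single (incl i) (u (n - 1) i)
      + ∑ s ∈ Finset.Ico 1 (n - 1), Pi.single (incl (tau^[s] i)) (u (n - 1) (tau^[s] i)) := by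
  rw [lhs, ofInner, ← sum_range_iterate_tau i,
    Finset.range_eq_Ico, Finset.sum_eq_sum_Ico_succ_bot i.pos]
  rfl

theorem cascade_zero (i : Fin (n - 1)) :
    cascade u hn i 0 = lhs u (some i) ⊔ lhs u none - lhs u (some i) + rhs u hn (some i) := by
  have h := congrFun (lhs_none_eq u i) (incl i)
  simp only [lhs, ofInner_incl, Pi.add_apply, Pi.single_eq_same, left_eq_add] at h
  rw [lhs_none_eq u i, lhs, Pi.single_sup_add_sub_single (c := c u i) h (Nat.le_add_right _ _),
    cascade, rhs]
  simp [add_assoc]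

theorem cascade_sub_two (i : Fin (n - 1)) :
    cascade u hn i (n - 2) = lhs u (some i) ⊔ lhs u none - lhs u none + rhs u hn none := by
  have h := congrFun (lhs_none_eq u i) (incl i)
  simp only [lhs, ofInner_incl, Pi.add_apply, Pi.single_eq_same, left_eq_add] at h
  have hσ := ntSig_iterate_tau_succ i (n - 2)
  rw [show n - 2 + 1 = n - 1 by omega, iterate_tau_sub_one] at hσ
  rw [lhs_none_eq u i, lhs, Pi.single_sup_add_sub_self (c := c u i) h (Nat.le_add_right _ _),
    cascade, rhs, show n - 2 + 1 = n - 1 by omega, iterate_tau_sub_one,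
    sum_range_iterate_tau i (u · (n - 1)), c,
    ← hσ]
  simp [dExp]

end Cascade

theorem lhs_some_sup_sub {i j : Fin (n - 1)} (hij : i ≠ j) :
    lhs u (some i) ⊔ lhs u (some j) - lhs u (some i) = lhs u (some j) := by
  have h : lhs u (some j) (incl i) = 0 := by simp [lhs, incl_injective.ne hij]
  show (Pi.single (incl i) (c u i) : Fin n → ℕ) ⊔ _ - Pi.single (incl i) (c u i) = _
  simpa using Pi.single_sup_add_sub_single h (Nat.zero_le (c u i))

theorem join_critical (hn : 3 ≤ n) (ρ₁ ρ₂ : Option (Fin (n - 1))) :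
    Join (ReflTransGen (Step u hn)) (lhs u ρ₁ ⊔ lhs u ρ₂ - lhs u ρ₁ + rhs u hn ρ₁)
      (lhs u ρ₁ ⊔ lhs u ρ₂ - lhs u ρ₂ + rhs u hn ρ₂) := by
  have hcascade : ∀ i, Join (ReflTransGen (Step u hn))
      (lhs u (some i) ⊔ lhs u none - lhs u (some i) + rhs u hn (some i))
      (lhs u (some i) ⊔ lhs u none - lhs u none + rhs u hn none) := fun i =>
    ⟨_, cascade_zero u hn i ▸ cascade_sub_two u hn i ▸ reflTransGen_cascade u hn i le_rfl,
      .refl⟩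
  rcases eq_or_ne ρ₁ ρ₂ with rfl | hne
  · exact ⟨_, .refl, .refl⟩
  match ρ₁, ρ₂, hne with
  | some i, some j, hne =>
    have hij : i ≠ j := fun h => hne (h ▸ rfl)
    rw [lhs_some_sup_sub hij, sup_comm, lhs_some_sup_sub hij.symm]
    exact ⟨rhs u hn (some j) + rhs u hn (some i),
      .single ⟨some j, rhs u hn (some i), add_comm _ _, add_comm _ _⟩,
      .single ⟨some i, rhs u hn (some j), add_comm _ _, rfl⟩⟩
  | some i, none, _ => exact hcascade i
  | none, some i, _ =>
    obtain ⟨d, h₁, h₂⟩ := hcascade i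
    rw [sup_comm]
    exact ⟨d, h₂, h₁⟩

theorem confluent_step {hn : 3 ≤ n} (hu : ntPos n u) {a : Fin n → ℕ} (ha : 0 < a (last hn))
    (hrel : ∀ ρ, lhs u ρ ⬝ᵥ a = rhs u hn ρ ⬝ᵥ a) {v w₁ w₂ : Fin n → ℕ}
    (h₁ : ReflTransGen (Step u hn) v w₁) (h₂ : ReflTransGen (Step u hn) v w₂) :
    Join (ReflTransGen (Step u hn)) w₁ w₂ :=
  newman (wellFounded_step hu ha hrel)
    (fun _ _ _ => RuleStep.join_of_critical (join_critical hn)) h₁ h₂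

variable (u) in
def Reduced (v : Fin n → ℕ) : Prop :=
  (∀ i, v (incl i) < c u i) ∧ ∃ i, v (incl i) < u (n - 1) i

theorem not_reduced_iff (hn : 3 ≤ n) {v : Fin n → ℕ} :
    ¬ Reduced u v ↔ ∃ ρ, lhs u ρ ≤ v := by
  simp only [Reduced, Option.exists, lhs, Pi.single_le_iff, ofInner_le_iff hn, not_and_or,
    not_forall, not_exists, not_lt]
  exact or_comm

theorem reduced_iff_forall_not_step (hn : 3 ≤ n) {v : Fin n → ℕ} :
    Reduced u v ↔ ∀ w, ¬ Step u hn v w := by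
  rw [← not_exists, ← not_iff_not, not_not, not_reduced_iff hn, exists_ruleStep_iff]

theorem Reduced.eq_of_reflTransGen {hn : 3 ≤ n} {v w : Fin n → ℕ} (hv : Reduced u v)
    (h : ReflTransGen (Step u hn) v w) : v = w := by
  rcases h.cases_head with rfl | ⟨_, hstep, _⟩
  · rfl
  · exact absurd hstep ((reduced_iff_forall_not_step hn).1 hv _)

theorem Reduced.add_single_last (hn : 3 ≤ n) {v : Fin n → ℕ} (hv : Reduced u v) (k : ℕ) :
    Reduced u (v + Pi.single (last hn) k) := by
  simpa [Reduced, incl_ne_last hn] using hv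

variable (u) in
def pfVector (j : Fin (n - 1)) : Fin n → ℕ :=
  ofInner fun i => if i = j then u (n - 1) i - 1 else c u i - 1

theorem pfVector_reduced (hu : ntPos n u) (j : Fin (n - 1)) : Reduced u (pfVector u j) := by
  refine ⟨fun i => ?_, j, ?_⟩
  · have := (hu i i.isLt).2.2.2
    simp only [pfVector, ofInner_incl, c]
    split_ifs <;> omega
  · have := (hu j j.isLt).1
    simp only [pfVector, ofInner_incl, if_true]
    omega

theorem not_reduced_pfVector_add (hu : ntPos n u) (j k : Fin (n - 1)) :
    ¬ Reduced u (pfVector u j + Pi.single (incl k) 1) := by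
  simp only [Reduced, Pi.add_apply, Pi.single_apply, incl_injective.eq_iff, pfVector,
    ofInner_incl, c, not_and, not_exists, not_lt]
  intro hlt i
  have := hu i i.isLt
  have := hu j j.isLt
  have := hlt k
  split_ifs at * <;> omega

theorem eq_pfVector_of_reduced (hn : 3 ≤ n) (hu : ntPos n u) {μ : Fin n → ℕ}
    (hμ : Reduced u μ) (hlast : μ (last hn) = 0)
    (hmax : ∀ j, ¬ Reduced u (μ + Pi.single (incl j) 1)) :
    ∃ j, μ = pfVector u j := by
  obtain ⟨j, hj⟩ := hμ.2
  refine ⟨j, ext_incl_last hn (fun i => ?_) (by simp [pfVector, hlast])⟩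
  -- If `μ_i` were below its value in `pfVector u j`, `μ + e_i` would be reduced, witnessed at `j`.
  have hred : ∀ m, μ (incl i) + 1 < c u i →
      (μ + Pi.single (incl i) 1 : Fin n → ℕ) (incl m) < u (n - 1) m → False := fun m h₁ h₂ =>
    hmax i ⟨fun k => by
      rcases eq_or_ne k i with rfl | hki <;> simp [incl_injective.eq_iff, *, hμ.1 k], m, h₂⟩
  have hi := hμ.1 i
  simp only [pfVector, ofInner_incl]
  by_contra hne
  rcases eq_or_ne i j with rfl | hij
  · have := (hu i i.isLt).2.2.2
    simp only [if_true, c] at hne hi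
    exact hred i (by simp only [c]; omega) (by simp; omega)
  · simp only [hij, if_false] at hne
    exact hred j (by omega) (by simpa [Pi.single_apply, incl_injective.eq_iff, hij.symm] using hj)

theorem pfVector_dotProduct_add (hu : ntPos n u) (a : Fin n → ℕ) (j : Fin (n - 1)) :
    pfVector u j ⬝ᵥ a + u (ntSig n j) j * a (incl j) = ∑ i, (c u i - 1) * a (incl i) := by
  rw [pfVector, ofInner_dotProduct,
    ← Fintype.sum_ite_eq' j fun i => u (ntSig n i) i * a (incl i), ← Finset.sum_add_distrib]
  refine Finset.sum_congr rfl fun i _ => ?_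
  split_ifs with hij
  · have := (hu i i.isLt).1
    rw [← add_mul, c]
    congr 1
    omega
  · rfl

structure IsNorthcott (K : Type*) [Field K] (hn : 3 ≤ n) (u : ℕ → ℕ → ℕ) (a : Fin n → ℕ) :
    Prop where
  exponents_pos : ntPos n u
  generators_pos : ∀ i, 0 < a i
  ker_eq : RingHom.ker (aeval fun i => (Polynomial.X : Polynomial K) ^ a i) = ntIdeal K n hn u

namespace IsNorthcott

variable {K : Type*} [Field K] {hn : 3 ≤ n} {a : Fin n → ℕ}

theorem exists_reduced (h : IsNorthcott K hn u a) (v : Fin n → ℕ) :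
    ∃ w, Reduced u w ∧ w ⬝ᵥ a = v ⬝ᵥ a ∧ v (last hn) ≤ w (last hn) := by
  obtain ⟨w, hvw, hw⟩ := exists_reflTransGen_irreducible
    (wellFounded_step h.exponents_pos (h.generators_pos _) (lhs_dotProduct h.ker_eq)) v
  exact ⟨w, (reduced_iff_forall_not_step hn).2 hw,
    (reflTransGen_step_dotProduct_eq (lhs_dotProduct h.ker_eq) hvw).symm,
    reflTransGen_step_last_le h.exponents_pos hvw⟩

theorem eq_of_reduced (h : IsNorthcott K hn u a) {v w : Fin n → ℕ} (hv : Reduced u v)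
    (hw : Reduced u w) (hvw : v ⬝ᵥ a = w ⬝ᵥ a) : v = w := by
  have hrel := lhs_dotProduct h.ker_eq
  let con := RuleStep.joinCon (lhs u) (rhs u hn)
    (confluent_step h.exponents_pos (h.generators_pos _) hrel)
  have hjoin : con v w := by
    refine AddCon.rel_of_sub_mem_span (K := K) (RuleStep.joinCon_rule _) ?_
    rw [← ntIdeal_eq_span, ← h.ker_eq, RingHom.mem_ker, map_sub, aeval_prodXPow, aeval_prodXPow,
      hvw, sub_self]
  obtain ⟨d, hvd, hwd⟩ := hjoin
  exact (hv.eq_of_reflTransGen hvd).trans (hw.eq_of_reflTransGen hwd).symm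

theorem exists_last_pos (h : IsNorthcott K hn u a) {v : Fin n → ℕ} (hv : ¬ Reduced u v) :
    ∃ w, w ⬝ᵥ a = v ⬝ᵥ a ∧ 0 < w (last hn) := by
  obtain ⟨w, hvw⟩ := exists_ruleStep_iff.2 ((not_reduced_iff hn).1 hv)
  exact ⟨w, (reflTransGen_step_dotProduct_eq (lhs_dotProduct h.ker_eq) (.single hvw)).symm,
    Nat.zero_lt_of_lt (Step.last_lt h.exponents_pos hvw)⟩

theorem exists_eq_pfVector (h : IsNorthcott K hn u a) {z : ℤ}
    (hz : z ∈ pseudoFrobenius (AddSubmonoid.closure (Set.range a))) :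
    ∃ j, z = ((pfVector u j ⬝ᵥ a : ℕ) : ℤ) - a (last hn) := by
  rw [mem_pseudoFrobenius_closure_iff h.generators_pos] at hz
  obtain ⟨hzS, hzadd⟩ := hz
  obtain ⟨v, hv⟩ := hzadd (last hn)
  obtain ⟨μ, hμ, hμv, -⟩ := h.exists_reduced v
  have hlast : μ (last hn) = 0 := by
    by_contra hne
    obtain ⟨w, rfl⟩ := exists_eq_add_single (Nat.pos_of_ne_zero hne)
    refine hzS ⟨w, ?_⟩
    rw [add_dotProduct, single_dotProduct] at hμv
    omega
  have hmax : ∀ j, ¬ Reduced u (μ + Pi.single (incl j) 1) := by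
    intro j hred
    obtain ⟨ν, hν⟩ := hzadd (incl j)
    obtain ⟨ν', hν', hν'ν, -⟩ := h.exists_reduced ν
    have heq := h.eq_of_reduced hred (hν'.add_single_last hn 1) (by
      simp only [add_dotProduct, single_dotProduct]
      omega)
    simpa [hlast, incl_ne_last hn j |>.symm] using congrFun heq (last hn)
  obtain ⟨j, rfl⟩ := eq_pfVector_of_reduced hn h.exponents_pos hμ hlast hmax
  exact ⟨j, by omega⟩

theorem mem_pseudoFrobenius (h : IsNorthcott K hn u a) (j : Fin (n - 1)) :
    ((pfVector u j ⬝ᵥ a : ℕ) : ℤ) - a (last hn) ∈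
      pseudoFrobenius (AddSubmonoid.closure (Set.range a)) := by
  rw [mem_pseudoFrobenius_closure_iff h.generators_pos]
  refine ⟨fun ⟨v, hv⟩ => ?_, fun x => ?_⟩
  · obtain ⟨w, hw, hwv, hlast⟩ := h.exists_reduced (v + Pi.single (last hn) 1)
    have heq := h.eq_of_reduced hw (pfVector_reduced h.exponents_pos j) (by
      rw [hwv, add_dotProduct, single_dotProduct]
      omega)
    simp [heq, pfVector] at hlast
  · rcases incl_or_last hn x with ⟨k, rfl⟩ | rfl
    · obtain ⟨w, hw, hlast⟩ := h.exists_last_pos (not_reduced_pfVector_add h.exponents_pos j k)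
      obtain ⟨w', rfl⟩ := exists_eq_add_single hlast
      refine ⟨w', ?_⟩
      rw [add_dotProduct, single_dotProduct, add_dotProduct, single_dotProduct] at hw
      omega
    · exact ⟨pfVector u j, by ring⟩

theorem injective_pfVector_dotProduct (h : IsNorthcott K hn u a) :
    Function.Injective fun j => pfVector u j ⬝ᵥ a := by
  intro j k hjk
  by_contra hne
  have heq := congrFun (h.eq_of_reduced (pfVector_reduced h.exponents_pos j)
    (pfVector_reduced h.exponents_pos k) hjk) (incl j)
  have := h.exponents_pos j j.isLt
  simp [pfVector, hne, c] at heq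
  omega

theorem pseudoFrobenius_eq_range (h : IsNorthcott K hn u a) :
    pseudoFrobenius (AddSubmonoid.closure (Set.range a)) =
      Set.range fun j => ((pfVector u j ⬝ᵥ a : ℕ) : ℤ) - a (last hn) :=
  Set.ext fun _ => ⟨fun hz => (h.exists_eq_pfVector hz).imp fun _ => Eq.symm,
    fun ⟨j, hj⟩ => hj ▸ h.mem_pseudoFrobenius j⟩

end IsNorthcott

end Northcott

open Northcott in
/-- for a numerical semigroup `S` of Northcott type, with
`N = ∑_{i=1}^{n-1}(u_{ni}+u_{σ(i),i}−1)a_i`, the pseudo-Frobenius numbers are exactly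
`N − u_{σ(j),j}a_j − a_n` for `j = 1,…,n−1`; these values are pairwise distinct, and the
type of `S` is `n−1`. -/
theorem northcott_pseudo_frobenius (n : ℕ) (hn : 3 ≤ n) (u : ℕ → ℕ → ℕ) (hu : ntPos n u)
    (a : Fin n → ℕ) (ha : ∀ i, 0 < a i)
    (hker : RingHom.ker (MvPolynomial.aeval (R := ℚ)
        (fun i : Fin n => (Polynomial.X : Polynomial ℚ) ^ a i)).toRingHom
      = ntIdeal ℚ n hn u) :
    {z : ℤ | (¬ ∃ s ∈ AddSubmonoid.closure (Set.range a), (s : ℤ) = z) ∧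
        ∀ s : ℕ, s ∈ AddSubmonoid.closure (Set.range a) → s ≠ 0 →
          ∃ t ∈ AddSubmonoid.closure (Set.range a), (t : ℤ) = z + s}
      = {z : ℤ | ∃ j : Fin (n - 1),
          z = (∑ i : Fin (n - 1), ((u (n - 1) i + u (ntSig n i) i - 1)
                  * a (⟨(i : ℕ), by have := i.isLt; omega⟩ : Fin n) : ℕ) : ℤ)
            - (u (ntSig n j) j * a (⟨(j : ℕ), by have := j.isLt; omega⟩ : Fin n) : ℕ)
            - (a (⟨n - 1, by omega⟩ : Fin n) : ℕ)} ∧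
    Function.Injective (fun j : Fin (n - 1) =>
      (∑ i : Fin (n - 1), ((u (n - 1) i + u (ntSig n i) i - 1)
          * a (⟨(i : ℕ), by have := i.isLt; omega⟩ : Fin n) : ℕ) : ℤ)
        - (u (ntSig n j) j * a (⟨(j : ℕ), by have := j.isLt; omega⟩ : Fin n) : ℕ)
        - (a (⟨n - 1, by omega⟩ : Fin n) : ℕ)) ∧
    Set.ncard {z : ℤ | (¬ ∃ s ∈ AddSubmonoid.closure (Set.range a), (s : ℤ) = z) ∧
        ∀ s : ℕ, s ∈ AddSubmonoid.closure (Set.range a) → s ≠ 0 →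
          ∃ t ∈ AddSubmonoid.closure (Set.range a), (t : ℤ) = z + s} = n - 1 := by
  have h : IsNorthcott ℚ hn u a := ⟨hu, ha, hker⟩
  have hinj : Function.Injective fun j => ((pfVector u j ⬝ᵥ a : ℕ) : ℤ) - a (last hn) :=
    fun j k hjk => h.injective_pfVector_dotProduct (by simpa using hjk)
  have hval : ∀ j : Fin (n - 1),
      (∑ i : Fin (n - 1), ((u (n - 1) i + u (ntSig n i) i - 1)
          * a (⟨(i : ℕ), by have := i.isLt; omega⟩ : Fin n) : ℕ) : ℤ)
        - (u (ntSig n j) j * a (⟨(j : ℕ), by have := j.isLt; omega⟩ : Fin n) : ℕ)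
        - (a (⟨n - 1, by omega⟩ : Fin n) : ℕ)
      = ((pfVector u j ⬝ᵥ a : ℕ) : ℤ) - a (last hn) := fun j => by
    show ∑ i, (((c u i - 1) * a (incl i) : ℕ) : ℤ) - ((u (ntSig n j) j * a (incl j) : ℕ) : ℤ)
      - (a (last hn) : ℤ) = _
    rw [← Nat.cast_sum, ← pfVector_dotProduct_add hu a j]
    push_cast
    ring
  change pseudoFrobenius _ = _ ∧ _ ∧ (pseudoFrobenius _).ncard = _
  simp only [hval, h.pseudoFrobenius_eq_range]
  refine ⟨Set.ext fun z => by simp [eq_comm], hinj, ?_⟩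
  rw [Set.ncard_range_of_injective hinj, Nat.card_eq_fintype_card, Fintype.card_fin]
end

section
/- Let I ⊂ k[x_1,…,x_n] be a critical ideal of Northcott type, generated by f_1,…,f_{n-1}, D where (f_1,…,f_{n-1})ᵀ = Φ·mᵀ, D = det(Φ), Φ is the Northcott matrix with monomial entries and m = (x_1^{u_{21}},…,x_{n-2}^{u_{n-1,n-2}}, x_{n-1}^{u_{1,n-1}}). Then ⟨f_1,…,f_{n-1}⟩ = I ∩ ⟨m⟩, where ⟨m⟩ is the monomial ideal generated by the entries of m. -/
/-!
Write `J = ⟨f_1,…,f_{n-1}⟩` and `M = ⟨m⟩`. Since `f = Φ·m`, each `f_i` reads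
`x_i^{u_{ni}} m_i − x_n^{u_{in}} m_{σ⁻¹(i)}`, so `J ⊆ M`; and because `Φ` is a single cycle,
the congruences `x_i^{u_{ni}} m_i ≡ x_n^{u_{in}} m_{σ⁻¹(i)} (mod J)` chain once around the cycle
to `D·m_j ∈ J` (Cramer's rule for `Φ`). Conversely `D` is a nonzerodivisor modulo `M`: the
generators of `M` do not involve `x_n`, while `D` is a monomial free of `x_n` minus a power
of `x_n`, so for `p ∉ M` the term `−x_n^s·x^μ` of `pD`, with `x^μ` the monomial of `p` outside
`M` of largest `x_n`-degree, cannot cancel. Hence if `g + rD ∈ M` with `g ∈ J`, then `rD ∈ M`,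
so `r ∈ M` and `rD ∈ J`.
-/

open MvPolynomial

theorem Fin.val_sub_one_eq_ite {k : ℕ} [NeZero k] (i : Fin k) :
    ((i - 1 : Fin k) : ℕ) = if (i : ℕ) = 0 then k - 1 else i - 1 := by
  obtain ⟨k, rfl⟩ := Nat.exists_eq_succ_of_ne_zero (NeZero.ne k)
  rw [Fin.coe_sub_one, Nat.succ_sub_one]
  simp only [← Fin.val_eq_zero_iff]

open Fin.NatCast in
theorem Fin.prod_mul_eq_prod_mul_of_mul_eq_mul_sub_one {M : Type*} [CommMonoid M] {k : ℕ}
    [NeZero k] {a b m : Fin k → M} (h : ∀ i, a i * m i = b i * m (i - 1)) (j : Fin k) :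
    (∏ i, a i) * m j = (∏ i, b i) * m j := by
  have chain : ∀ l : ℕ, (∏ t ∈ Finset.range l, a (j - t)) * m j
      = (∏ t ∈ Finset.range l, b (j - t)) * m (j - l) := by
    intro l
    induction l with
    | zero => simp
    | succ l ih =>
      rw [Finset.prod_range_succ, Finset.prod_range_succ, mul_right_comm, ih, mul_assoc,
        mul_assoc, mul_comm (m _), h, Nat.cast_succ, sub_sub]
  have reindex (g : Fin k → M) : ∏ t ∈ Finset.range k, g (j - t) = ∏ i, g i := by
    rw [← Fin.prod_univ_eq_prod_range (fun t => g (j - t))]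
    simp only [Fin.cast_val_eq_self]
    exact Equiv.prod_comp (Equiv.subLeft j) g
  simpa [reindex] using chain k

theorem Finsupp.le_of_le_add_single {σ : Type*} {s μ : σ →₀ ℕ} {y : σ} {e : ℕ} (hs : s y = 0)
    (hle : s ≤ μ + Finsupp.single y e) : s ≤ μ := by
  intro i
  by_cases hi : i = y
  · subst hi; simp [hs]
  · simpa [Finsupp.single_apply, Ne.symm hi] using hle i

theorem Ideal.sup_span_singleton_inf_eq {R : Type*} [CommRing R] {J M : Ideal R} {d : R}
    (hJM : J ≤ M) (hMd : M ≤ J.colon {d}) (hdM : M.colon {d} ≤ M) :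
    (J ⊔ Ideal.span {d}) ⊓ M = J := by
  refine le_antisymm ?_ (le_inf le_sup_left hJM)
  rintro _ ⟨hpI, hpM⟩
  obtain ⟨g, hg, _, hw, rfl⟩ := Submodule.mem_sup.1 hpI
  obtain ⟨r, rfl⟩ := Ideal.mem_span_singleton'.1 hw
  have hr : r ∈ M := hdM (Submodule.mem_colon_singleton.2 (by simpa using sub_mem hpM (hJM hg)))
  exact add_mem hg (Submodule.mem_colon_singleton.1 (hMd hr))

namespace MvPolynomial

variable {σ R : Type*} [CommRing R]

theorem mem_span_monomial_of_mul_monomial_sub_X_pow_mem {S : Set (σ →₀ ℕ)} {y : σ}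
    (hS : ∀ s ∈ S, s y = 0) {P : σ →₀ ℕ} (hP : P y = 0) {e : ℕ} (he : 0 < e)
    {p : MvPolynomial σ R}
    (h : p * (monomial P 1 - X y ^ e) ∈ Ideal.span ((fun s => monomial s 1) '' S)) :
    p ∈ Ideal.span ((fun s => monomial s (1 : R)) '' S) := by
  classical
  rw [mem_ideal_span_monomial_image] at h ⊢
  by_contra! hp
  set T := p.support.filter fun μ => ∀ s ∈ S, ¬ s ≤ μ
  have hT : T.Nonempty := by
    obtain ⟨μ, hμ, hout⟩ := hp
    exact ⟨μ, Finset.mem_filter.2 ⟨hμ, hout⟩⟩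
  obtain ⟨μ, hμT, hmax⟩ := T.exists_max_image (fun μ => μ y) hT
  obtain ⟨hμ, hμout⟩ := Finset.mem_filter.1 hμT
  set ν := μ + Finsupp.single y e
  have hνout : ∀ s ∈ S, ¬ s ≤ ν := fun s hs hle =>
    hμout s hs (Finsupp.le_of_le_add_single (hS s hs) hle)
  have hν : coeff ν (p * (monomial P 1 - X y ^ e)) = 0 := by
    by_contra hne
    obtain ⟨s, hs, hle⟩ := h ν (mem_support_iff.2 hne)
    exact hνout s hs hle
  have hshift : coeff (ν - P) p = 0 := by
    by_contra hne
    have hin : ν - P ∈ T := Finset.mem_filter.2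
      ⟨mem_support_iff.2 hne, fun s hs hle => hνout s hs (hle.trans tsub_le_self)⟩
    have hdeg : (ν - P) y = μ y + e := by simp [ν, hP]
    have := hmax _ hin
    omega
  rw [mul_sub, coeff_sub, coeff_mul_monomial', X_pow_eq_monomial, coeff_mul_monomial,
    hshift] at hν
  simp only [mul_one, ite_self, zero_sub, neg_eq_zero] at hν
  exact mem_support_iff.1 hμ hν

end MvPolynomial

section Northcott

variable {K : Type*} [Field K] {n : ℕ}

variable (K n) in
/-- The entries of the vector `m`. -/
noncomputable def ntM (u : ℕ → ℕ → ℕ) (j : Fin (n - 1)) : MvPolynomial (Fin n) K :=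
  X (⟨(j : ℕ), by omega⟩ : Fin n) ^ u (ntSig n j) j

theorem val_sub_one_eq_ntTau [NeZero (n - 1)] (i : Fin (n - 1)) :
    ((i - 1 : Fin (n - 1)) : ℕ) = ntTau n i := by
  rw [Fin.val_sub_one_eq_ite, ntTau]
  split_ifs <;> omega

theorem ntSig_ntTau (hn : 3 ≤ n) {i : ℕ} (hi : i < n - 1) : ntSig n (ntTau n i) = i := by
  unfold ntSig ntTau
  split_ifs <;> omega

theorem ntF_eq_mul_ntM_sub_mul_ntM [NeZero (n - 1)] (hn : 3 ≤ n) (u : ℕ → ℕ → ℕ)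
    (i : Fin (n - 1)) :
    ntF K n hn u i = X (⟨i, by omega⟩ : Fin n) ^ u (n - 1) i * ntM K n u i
      - X (⟨n - 1, by omega⟩ : Fin n) ^ u i (n - 1) * ntM K n u (i - 1) := by
  have hτ := val_sub_one_eq_ntTau i
  have hidx : (⟨(i - 1 : Fin (n - 1)), by omega⟩ : Fin n) = ⟨ntTau n i, by omega⟩ := Fin.ext hτ
  rw [ntF, ntM, ntM, hidx, hτ, ntSig_ntTau hn i.isLt, pow_add]
  ring

theorem span_ntF_le_span_ntM [NeZero (n - 1)] (hn : 3 ≤ n) (u : ℕ → ℕ → ℕ) :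
    Ideal.span (Set.range (ntF K n hn u)) ≤ Ideal.span (Set.range (ntM K n u)) := by
  rw [Ideal.span_le]
  rintro _ ⟨i, rfl⟩
  rw [ntF_eq_mul_ntM_sub_mul_ntM]
  exact sub_mem (Ideal.mul_mem_left _ _ (Ideal.subset_span ⟨i, rfl⟩))
    (Ideal.mul_mem_left _ _ (Ideal.subset_span ⟨i - 1, rfl⟩))

theorem ntD_mul_ntM_mem [NeZero (n - 1)] (hn : 3 ≤ n) (u : ℕ → ℕ → ℕ) (j : Fin (n - 1)) :
    ntD K n hn u * ntM K n u j ∈ Ideal.span (Set.range (ntF K n hn u)) := by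
  set q := Ideal.Quotient.mk (Ideal.span (Set.range (ntF K n hn u)))
  have hrel (i : Fin (n - 1)) :
      q (X ⟨i, by omega⟩ ^ u (n - 1) i) * q (ntM K n u i)
        = q (X ⟨n - 1, by omega⟩ ^ u i (n - 1)) * q (ntM K n u (i - 1)) := by
    rw [← map_mul, ← map_mul, Ideal.Quotient.eq, ← ntF_eq_mul_ntM_sub_mul_ntM hn]
    exact Ideal.subset_span ⟨i, rfl⟩
  have hcycle := Fin.prod_mul_eq_prod_mul_of_mul_eq_mul_sub_one hrel j
  simp only [← map_prod, ← map_mul, Finset.prod_pow_eq_pow_sum] at hcycle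
  rw [ntD, sub_mul, ← Ideal.Quotient.eq]
  exact hcycle

theorem span_ntM_le_colon_ntD [NeZero (n - 1)] (hn : 3 ≤ n) (u : ℕ → ℕ → ℕ) :
    Ideal.span (Set.range (ntM K n u))
      ≤ (Ideal.span (Set.range (ntF K n hn u))).colon {ntD K n hn u} := by
  rw [Ideal.span_le]
  rintro _ ⟨j, rfl⟩
  rw [SetLike.mem_coe, Submodule.mem_colon_singleton, smul_eq_mul, mul_comm]
  exact ntD_mul_ntM_mem hn u j

theorem ntD_eq_monomial_sub_X_pow (hn : 3 ≤ n) (u : ℕ → ℕ → ℕ) :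
    ntD K n hn u = monomial (∑ i : Fin (n - 1), Finsupp.single ⟨i, by omega⟩ (u (n - 1) i)) 1
      - X ⟨n - 1, by omega⟩ ^ ∑ i : Fin (n - 1), u i (n - 1) := by
  simp only [ntD, monomial_sum_one, X_pow_eq_monomial]

theorem span_ntM_eq_span_monomial (u : ℕ → ℕ → ℕ) :
    Ideal.span (Set.range (ntM K n u)) = Ideal.span ((fun s => monomial s 1) ''
      Set.range fun j : Fin (n - 1) => Finsupp.single ⟨j, by omega⟩ (u (ntSig n j) j)) := by
  rw [← Set.range_comp]
  congr with j
  simp [ntM, X_pow_eq_monomial]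

theorem colon_ntD_le_span_ntM (hn : 3 ≤ n) (u : ℕ → ℕ → ℕ) (hu : ntPos n u) :
    (Ideal.span (Set.range (ntM K n u))).colon {ntD K n hn u}
      ≤ Ideal.span (Set.range (ntM K n u)) := by
  have hlast_ne : ∀ i : Fin (n - 1), (⟨n - 1, by omega⟩ : Fin n) ≠ ⟨i, by omega⟩ :=
    fun i => Fin.ne_of_val_ne (by have := i.isLt; dsimp only; omega)
  intro r hr
  rw [Submodule.mem_colon_singleton, smul_eq_mul, ntD_eq_monomial_sub_X_pow] at hr
  rw [span_ntM_eq_span_monomial] at hr ⊢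
  refine MvPolynomial.mem_span_monomial_of_mul_monomial_sub_X_pow_mem ?_ ?_ ?_ hr
  · rintro _ ⟨j, rfl⟩
    exact Finsupp.single_eq_of_ne (hlast_ne j)
  · simp only [Finsupp.finsetSum_apply]
    exact Finset.sum_eq_zero fun i _ => Finsupp.single_eq_of_ne (hlast_ne i)
  · exact Finset.sum_pos (fun i _ => (hu i i.isLt).2.1) ⟨⟨0, by omega⟩, Finset.mem_univ _⟩

end Northcott

/-- for a critical ideal of Northcott type `I = ⟨f_1,…,f_{n-1},D⟩` one has
`⟨f_1,…,f_{n-1}⟩ = I ∩ ⟨m⟩`, where `⟨m⟩` is the monomial ideal generated by the entries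
`x_j^{u_{σ(j),j}}` of `m`. -/
theorem northcott_complete_intersection_link {K : Type*} [Field K] (n : ℕ) (hn : 3 ≤ n)
    (u : ℕ → ℕ → ℕ) (hu : ntPos n u) :
    Ideal.span (Set.range (ntF K n hn u))
      = ntIdeal K n hn u ⊓
        Ideal.span (Set.range fun j : Fin (n - 1) =>
          (X (⟨(j : ℕ), by have := j.isLt; omega⟩ : Fin n) : MvPolynomial (Fin n) K)
            ^ (u (ntSig n j) j)) := by
  have : NeZero (n - 1) := ⟨by omega⟩
  rw [ntIdeal, Ideal.span_union]
  exact (Ideal.sup_span_singleton_inf_eq (span_ntF_le_span_ntM hn u)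
    (span_ntM_le_colon_ntD hn u) (colon_ntD_le_span_ntM hn u hu)).symm
end
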